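/- Let Diff(M) act on the abelian group Ω²_cl(M) of closed 2-forms by pullback along inverses, forming the semidirect product G = Ω²_cl(M) ⋊ Diff(M) with product (B₁,φ₁)(B₂,φ₂) = (B₁ + (φ₁⁻¹)^* B₂, φ₁φ₂). Then each (B,φ) ∈ G acts on sections of TM ⊕ T*M by (B,φ)·(X,ξ) := (φ_* X, (φ⁻¹)^*ξ − i_{φ_* X} B), and this is an automorphism of the Dorfman bracket: (B,φ)·[(X,ξ),(Y,η)] = [(B,φ)·(X,ξ), (B,φ)·(Y,η)]. -/
import Mathlib


/-- The Dorfman bracket `[(X,ξ),(Y,η)] = ([X,Y], L_X η − i_Y dξ)`. -/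
def dor {V Ω1 Ω2 : Type*} [AddCommGroup V] [Module ℝ V]
    [AddCommGroup Ω1] [Module ℝ Ω1] [AddCommGroup Ω2] [Module ℝ Ω2]
    (br : V →ₗ[ℝ] V →ₗ[ℝ] V) (L1 : V →ₗ[ℝ] Ω1 →ₗ[ℝ] Ω1)
    (ι1 : V →ₗ[ℝ] Ω2 →ₗ[ℝ] Ω1) (d1 : Ω1 →ₗ[ℝ] Ω2)
    (a b : V × Ω1) : V × Ω1 :=
  (br a.1 b.1, L1 a.1 b.2 - ι1 b.1 (d1 a.2))

/-- An element `(B, φ)` of `Ω²_cl(M) ⋊ Diff(M)`, acting on `TM ⊕ T*M` by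
`(X,ξ) ↦ (φ_* X, (φ⁻¹)^* ξ − i_{φ_* X} B)`, is an automorphism of the Dorfman bracket.
Here `gV, g1, g2` model the (push-forward/pull-back) action of the diffeomorphism `φ` on
vector fields, 1-forms and 2-forms, intertwining the Lie bracket, Lie derivative,
interior product and exterior derivative; `B` is a closed 2-form. -/
theorem stmt11 {V Ω1 Ω2 Ω3 : Type*} [AddCommGroup V] [Module ℝ V]
    [AddCommGroup Ω1] [Module ℝ Ω1] [AddCommGroup Ω2] [Module ℝ Ω2]
    [AddCommGroup Ω3] [Module ℝ Ω3]
    (br : V →ₗ[ℝ] V →ₗ[ℝ] V) (L1 : V →ₗ[ℝ] Ω1 →ₗ[ℝ] Ω1) (L2 : V →ₗ[ℝ] Ω2 →ₗ[ℝ] Ω2)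
    (ι1 : V →ₗ[ℝ] Ω2 →ₗ[ℝ] Ω1) (ι2 : V →ₗ[ℝ] Ω3 →ₗ[ℝ] Ω2)
    (d1 : Ω1 →ₗ[ℝ] Ω2) (d2 : Ω2 →ₗ[ℝ] Ω3)
    (hLι : ∀ (X Z : V) (ω : Ω2), L1 X (ι1 Z ω) - ι1 Z (L2 X ω) = ι1 (br X Z) ω)
    (hCartan2 : ∀ (X : V) (ω : Ω2), L2 X ω = d1 (ι1 X ω) + ι2 X (d2 ω))
    (gV : V ≃ₗ[ℝ] V) (g1 : Ω1 ≃ₗ[ℝ] Ω1) (g2 : Ω2 ≃ₗ[ℝ] Ω2)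
    (hgbr : ∀ X Y : V, gV (br X Y) = br (gV X) (gV Y))
    (hgL : ∀ (X : V) (η : Ω1), g1 (L1 X η) = L1 (gV X) (g1 η))
    (hgι : ∀ (Y : V) (ω : Ω2), g1 (ι1 Y ω) = ι1 (gV Y) (g2 ω))
    (hgd : ∀ ξ : Ω1, g2 (d1 ξ) = d1 (g1 ξ))
    (B : Ω2) (hB : d2 B = 0) :
    ∀ (X Y : V) (ξ η : Ω1),
      dor br L1 ι1 d1 (gV X, g1 ξ - ι1 (gV X) B) (gV Y, g1 η - ι1 (gV Y) B)
        = (gV (dor br L1 ι1 d1 (X, ξ) (Y, η)).1,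
           g1 (dor br L1 ι1 d1 (X, ξ) (Y, η)).2
             - ι1 (gV (dor br L1 ι1 d1 (X, ξ) (Y, η)).1) B) := by
  intro X Y ξ η
  have h1 : d1 (ι1 (gV X) B) = L2 (gV X) B := by
    rw [hCartan2 (gV X) B, hB, map_zero, add_zero]
  refine Prod.ext (by simp [dor, hgbr]) ?_
  simp only [dor, map_sub, h1]
  rw [hgL, hgι, hgd, hgbr, ← hLι (gV X) (gV Y) B]
  abel
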